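/- In the syntactic synchronous algebra of a relation R, the syntactic congruence of the accepting set coincides with the dependency relation. -/

import Mathlib

/-- Letter-types: `l` for a pair of proper letters, `p` for (letter, padding),
`q` for (padding, letter). -/
inductive LTy | l | p | q
deriving DecidableEq

/-- The five types of (well-formed) synchronous words:
`ll`, `ll→lb` (= `lllb`), `lb`, `ll→bl` (= `llbl`), `bl`. -/
inductive STy | ll | lllb | lb | llbl | bl
deriving DecidableEq

namespace STy

/-- Letter-type of the first letter. -/
def src : STy → LTy
  | ll => .l | lllb => .l | lb => .p | llbl => .l | bl => .q

/-- Letter-type of the last letter. -/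
def tgt : STy → LTy
  | ll => .l | lllb => .p | lb => .p | llbl => .q | bl => .q

/-- `σ = α→β` is compatible with `τ = β'→γ` iff `β = β'` or `β = ll`. -/
def compat (σ τ : STy) : Prop := σ.tgt = τ.src ∨ σ.tgt = LTy.l

/-- Product of compatible types (junk on incompatible pairs). -/
def comp : STy → STy → STy
  | ll, ll => ll
  | ll, lllb => lllb
  | ll, lb => lllb
  | ll, llbl => llbl
  | ll, bl => llbl
  | lllb, _ => lllb
  | lb, _ => lb
  | llbl, _ => llbl
  | bl, _ => bl

end STy

/-- A synchronous algebra: a `STy`-typed set with a dependency relation and a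
partial associative product defined exactly on compatible pairs, monotone with
respect to dependency, with units.  The partial product is modelled as an
`Option`-valued total product. -/
structure SyncAlg where
  A : Type
  ty : A → STy
  dep : A → A → Prop
  mul : A → A → Option A
  dep_refl : ∀ x, dep x x
  dep_symm : ∀ {x y}, dep x y → dep y x
  dep_eq : ∀ {x y}, dep x y → ty x = ty y → x = y
  mul_defined : ∀ x y, (mul x y).isSome ↔ (ty x).compat (ty y)
  ty_mul : ∀ {x y z}, mul x y = some z → ty z = (ty x).comp (ty y)
  mul_assoc : ∀ x y z,
    (mul x y).bind (fun a => mul a z) = (mul y z).bind (fun b => mul x b)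
  dep_mul_left : ∀ {x x' y z z'}, dep x x' →
    mul x y = some z → mul x' y = some z' → dep z z'
  dep_mul_right : ∀ {x x' y z z'}, dep x x' →
    mul y x = some z → mul y x' = some z' → dep z z'
  unit : STy → A
  ty_unit : ∀ τ, ty (unit τ) = τ
  unit_mul : ∀ {τ x z}, mul (unit τ) x = some z → dep z x
  mul_unit : ∀ {τ x z}, mul x (unit τ) = some z → dep z x
  unit_lllb : mul (unit .ll) (unit .lb) = some (unit .lllb)
  unit_llbl : mul (unit .ll) (unit .bl) = some (unit .llbl)

namespace SyncAlg

/-- A closed subset of a synchronous algebra: saturated under dependency. -/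
def Closed (S : SyncAlg) (C : Set S.A) : Prop :=
  ∀ {x y : S.A}, S.dep x y → (x ∈ C ↔ y ∈ C)

/-- Two-sided partial product `x·a·y`. -/
def mul3 (S : SyncAlg) (x a y : S.A) : Option S.A :=
  (S.mul x a).bind fun u => S.mul u y

/-- The syntactic congruence of a subset `C` of a synchronous algebra. -/
def synCong (S : SyncAlg) (C : Set S.A) (a b : S.A) : Prop :=
  (∀ x y u v, S.mul3 x a y = some u → S.mul3 x b y = some v → (u ∈ C ↔ v ∈ C)) ∧
  (∀ x u v, S.mul x a = some u → S.mul x b = some v → (u ∈ C ↔ v ∈ C)) ∧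
  (∀ y u v, S.mul a y = some u → S.mul b y = some v → (u ∈ C ↔ v ∈ C))

/-- Left residual `x⁻¹C` of a closed subset `C` by an element `x`. -/
def lres (S : SyncAlg) (x : S.A) (C : Set S.A) : Set S.A :=
  { y | ∃ y' u, S.synCong C y' y ∧ S.mul x y' = some u ∧ u ∈ C }

/-- Right residual `C·x⁻¹` of a closed subset `C` by an element `x`. -/
def rres (S : SyncAlg) (x : S.A) (C : Set S.A) : Set S.A :=
  { y | ∃ y' u, S.synCong C y' y ∧ S.mul y' x = some u ∧ u ∈ C }

end SyncAlg

/-- Morphisms of synchronous algebras: preserve types, units, product and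
dependency. -/
structure SyncHom (S T : SyncAlg) where
  toFun : S.A → T.A
  map_ty : ∀ x, T.ty (toFun x) = S.ty x
  map_unit : ∀ τ, toFun (S.unit τ) = T.unit τ
  map_mul : ∀ {x y z}, S.mul x y = some z →
    T.mul (toFun x) (toFun y) = some (toFun z)
  map_dep : ∀ {x y}, S.dep x y → T.dep (toFun x) (toFun y)
/-- Synchronous words over an alphabet `α`, organized by their five types. -/
inductive SyncW (α : Type) : Type
  | wll : List (α × α) → SyncW α
  | wlllb : List (α × α) → List α → SyncW α
  | wlb : List α → SyncW α
  | wllbl : List (α × α) → List α → SyncW α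
  | wbl : List α → SyncW α

namespace SyncW

variable {α : Type}

/-- The type of a synchronous word. -/
def ty : SyncW α → STy
  | wll _ => .ll | wlllb _ _ => .lllb | wlb _ => .lb | wllbl _ _ => .llbl | wbl _ => .bl

/-- Base identifications of the dependency relation on synchronous words. -/
inductive dep0 : SyncW α → SyncW α → Prop
  | ll_lllb (w : List (α × α)) : dep0 (wll w) (wlllb w [])
  | ll_llbl (w : List (α × α)) : dep0 (wll w) (wllbl w [])
  | lb_lllb (s : List α) : dep0 (wlb s) (wlllb [] s)
  | bl_llbl (s : List α) : dep0 (wbl s) (wllbl [] s)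

/-- The dependency relation: reflexive-symmetric closure of `dep0`. -/
def dep (x y : SyncW α) : Prop := x = y ∨ dep0 x y ∨ dep0 y x

/-- Concatenation of synchronous words (partial). -/
def mul : SyncW α → SyncW α → Option (SyncW α)
  | wll w, wll w' => some (wll (w ++ w'))
  | wll w, wlllb w' s => some (wlllb (w ++ w') s)
  | wll w, wlb s => some (wlllb w s)
  | wll w, wllbl w' s => some (wllbl (w ++ w') s)
  | wll w, wbl s => some (wllbl w s)
  | wlllb w s, wlb s' => some (wlllb w (s ++ s'))
  | wlb s, wlb s' => some (wlb (s ++ s'))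
  | wllbl w s, wbl s' => some (wllbl w (s ++ s'))
  | wbl s, wbl s' => some (wbl (s ++ s'))
  | _, _ => none

/-- Decoding into the pair of words represented. -/
def decode : SyncW α → List α × List α
  | wll w => (w.map Prod.fst, w.map Prod.snd)
  | wlllb w s => (w.map Prod.fst ++ s, w.map Prod.snd)
  | wlb s => (s, [])
  | wllbl w s => (w.map Prod.fst, w.map Prod.snd ++ s)
  | wbl s => ([], s)

end SyncW

set_option maxHeartbeats 2000000 in
/-- The free synchronous algebra `Sync(α)` of synchronous words over `α`. -/
def freeSync (α : Type) : SyncAlg where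
  A := SyncW α
  ty := SyncW.ty
  dep := SyncW.dep
  mul := SyncW.mul
  dep_refl x := Or.inl rfl
  dep_symm h := by
    rcases h with rfl | h | h
    · exact Or.inl rfl
    · exact Or.inr (Or.inr h)
    · exact Or.inr (Or.inl h)
  dep_eq := by
    rintro x y (rfl | h | h) hty <;> first
      | rfl
      | (cases h <;> simp [SyncW.ty] at hty)
  mul_defined x y := by
    cases x <;> cases y <;>
      simp [SyncW.mul, SyncW.ty, STy.compat, STy.tgt, STy.src]
  ty_mul := by
    intro x y z h
    cases x <;> cases y <;>
      simp [SyncW.mul] at h <;> subst h <;> rfl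
  mul_assoc x y z := by
    cases x <;> cases y <;> cases z <;>
      simp [SyncW.mul, List.append_assoc]
  dep_mul_left := by
    intro x x' y z z' h h1 h2
    rcases h with rfl | h | h
    · rw [h1] at h2; injection h2 with h2; rw [h2]; exact Or.inl rfl
    · cases h <;> cases y <;>
        simp [SyncW.mul] at h1 h2 <;> subst h1 <;> subst h2 <;>
        first
          | exact Or.inl rfl
          | exact Or.inr (Or.inl (by constructor))
          | exact Or.inr (Or.inr (by constructor))
    · cases h <;> cases y <;>
        simp [SyncW.mul] at h1 h2 <;> subst h1 <;> subst h2 <;>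
        first
          | exact Or.inl rfl
          | exact Or.inr (Or.inl (by constructor))
          | exact Or.inr (Or.inr (by constructor))
  dep_mul_right := by
    intro x x' y z z' h h1 h2
    rcases h with rfl | h | h
    · rw [h1] at h2; injection h2 with h2; rw [h2]; exact Or.inl rfl
    · cases h <;> cases y <;>
        simp [SyncW.mul] at h1 h2 <;> subst h1 <;> subst h2 <;>
        first
          | exact Or.inl rfl
          | exact Or.inr (Or.inl (by constructor))
          | exact Or.inr (Or.inr (by constructor))
    · cases h <;> cases y <;>
        simp [SyncW.mul] at h1 h2 <;> subst h1 <;> subst h2 <;>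
        first
          | exact Or.inl rfl
          | exact Or.inr (Or.inl (by constructor))
          | exact Or.inr (Or.inr (by constructor))
  unit := fun τ => match τ with
    | .ll => .wll []
    | .lllb => .wlllb [] []
    | .lb => .wlb []
    | .llbl => .wllbl [] []
    | .bl => .wbl []
  ty_unit τ := by cases τ <;> rfl
  unit_mul := by
    intro τ x z h
    cases τ <;> cases x <;> simp [SyncW.mul] at h <;> subst h <;>
      first
        | exact Or.inl rfl
        | exact Or.inr (Or.inl (by constructor))
        | exact Or.inr (Or.inr (by constructor))
  mul_unit := by
    intro τ x z h
    cases τ <;> cases x <;> simp [SyncW.mul] at h <;> subst h <;>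
      first
        | exact Or.inl rfl
        | exact Or.inr (Or.inl (by constructor))
        | exact Or.inr (Or.inr (by constructor))
  unit_lllb := rfl
  unit_llbl := rfl

/-- The closed subset of `Sync(α)` induced by a relation `R ⊆ α* × α*`. -/
def projS {α : Type} (R : Set (List α × List α)) : Set (SyncW α) :=
  { x | x.decode ∈ R }

/-- `⟨φ, B, Acc⟩` recognizes the relation `R` when `Acc` is closed and
`proj R = φ⁻¹[Acc]`. -/
def RecognizesRel {α : Type} (B : SyncAlg) (φ : SyncHom (freeSync α) B)
    (Acc : Set B.A) (R : Set (List α × List α)) : Prop :=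
  B.Closed Acc ∧ projS R = φ.toFun ⁻¹' Acc

/-! The syntactic congruence `~` of `Acc`, restricted to elements of equal type, is a
congruence of `A`. Quotienting by it and taking `~` itself as the dependency relation gives a
synchronous algebra that still recognizes `R`, through the image of `Acc`. By minimality of the
syntactic algebra there is a morphism back to `A`; it is a retraction of the quotient map, and
since morphisms preserve dependency, `x ~ y` forces `x ≍ y`. The converse holds for every
closed set. -/

namespace SyncAlg

variable {S : SyncAlg}

theorem mul3_eq_some_iff {x a y u : S.A} :
    S.mul3 x a y = some u ↔ ∃ w, S.mul x a = some w ∧ S.mul w y = some u :=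
  Option.bind_eq_some_iff

theorem exists_mul_of_ty_eq {x y x' y' z : S.A} (hx : S.ty x = S.ty x')
    (hy : S.ty y = S.ty y') (h : S.mul x y = some z) :
    ∃ z', S.mul x' y' = some z' ∧ S.ty z' = S.ty z := by
  have hdef : (S.ty x').compat (S.ty y') := hx ▸ hy ▸ (S.mul_defined x y).1 (by simp [h])
  obtain ⟨z', hz'⟩ := Option.isSome_iff_exists.mp ((S.mul_defined x' y').2 hdef)
  exact ⟨z', hz', by rw [S.ty_mul hz', S.ty_mul h, hx, hy]⟩

theorem exists_mul3_of_ty_eq {x a b y u : S.A} (hab : S.ty a = S.ty b)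
    (h : S.mul3 x a y = some u) : ∃ v, S.mul3 x b y = some v := by
  obtain ⟨w, hxa, hwy⟩ := mul3_eq_some_iff.mp h
  obtain ⟨w', hxb, hw'⟩ := exists_mul_of_ty_eq rfl hab hxa
  obtain ⟨v, hv, -⟩ := exists_mul_of_ty_eq hw'.symm rfl hwy
  exact ⟨v, mul3_eq_some_iff.mpr ⟨w', hxb, hv⟩⟩

theorem exists_mul_assoc {x y z xy w : S.A} (hxy : S.mul x y = some xy)
    (hw : S.mul xy z = some w) : ∃ yz, S.mul y z = some yz ∧ S.mul x yz = some w := by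
  have h := S.mul_assoc x y z
  rw [hxy, Option.bind_some, hw] at h
  exact Option.bind_eq_some_iff.mp h.symm

theorem exists_mul_assoc_symm {x y z yz w : S.A} (hyz : S.mul y z = some yz)
    (hw : S.mul x yz = some w) : ∃ xy, S.mul x y = some xy ∧ S.mul xy z = some w := by
  have h := S.mul_assoc x y z
  rw [hyz, Option.bind_some, hw] at h
  exact Option.bind_eq_some_iff.mp h

theorem exists_unit_ll_mul (a : S.A) : ∃ z, S.mul (S.unit .ll) a = some z :=
  Option.isSome_iff_exists.mp ((S.mul_defined _ _).2 (Or.inr (by rw [S.ty_unit]; rfl)))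

section SynCong

variable {C : Set S.A}

theorem synCong_refl (a : S.A) : S.synCong C a a := by
  refine ⟨fun _ _ _ _ hu hv => ?_, fun _ _ _ hu hv => ?_, fun _ _ _ hu hv => ?_⟩ <;>
    rw [Option.some_injective _ (hu.symm.trans hv)]

theorem synCong_symm {a b : S.A} (h : S.synCong C a b) : S.synCong C b a :=
  ⟨fun x y u v hu hv => (h.1 x y v u hv hu).symm,
   fun x u v hu hv => (h.2.1 x v u hv hu).symm,
   fun y u v hu hv => (h.2.2 y v u hv hu).symm⟩

theorem synCong_trans_left {x y z : S.A} (hxy : S.ty x = S.ty y)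
    (h₁ : S.synCong C x y) (h₂ : S.synCong C y z) : S.synCong C x z := by
  refine ⟨fun c d u v hu hv => ?_, fun c u v hu hv => ?_, fun d u v hu hv => ?_⟩
  · obtain ⟨m, hm⟩ := exists_mul3_of_ty_eq hxy hu
    exact (h₁.1 c d u m hu hm).trans (h₂.1 c d m v hm hv)
  · obtain ⟨m, hm, -⟩ := exists_mul_of_ty_eq rfl hxy hu
    exact (h₁.2.1 c u m hu hm).trans (h₂.2.1 c m v hm hv)
  · obtain ⟨m, hm, -⟩ := exists_mul_of_ty_eq hxy rfl hu
    exact (h₁.2.2 d u m hu hm).trans (h₂.2.2 d m v hm hv)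

theorem synCong_trans_right {x y z : S.A} (hyz : S.ty y = S.ty z)
    (h₁ : S.synCong C x y) (h₂ : S.synCong C y z) : S.synCong C x z :=
  synCong_symm (synCong_trans_left hyz.symm (synCong_symm h₂) (synCong_symm h₁))

theorem synCong_mul_right {x x' y z z' : S.A} (h : S.synCong C x x')
    (hz : S.mul x y = some z) (hz' : S.mul x' y = some z') : S.synCong C z z' := by
  refine ⟨fun c d u v hu hv => ?_, fun c u v hu hv => ?_, fun d u v hu hv => ?_⟩
  · obtain ⟨cz, hcz, hu⟩ := mul3_eq_some_iff.mp hu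
    obtain ⟨cz', hcz', hv⟩ := mul3_eq_some_iff.mp hv
    obtain ⟨cx, hcx, hcxy⟩ := exists_mul_assoc_symm hz hcz
    obtain ⟨cx', hcx', hcx'y⟩ := exists_mul_assoc_symm hz' hcz'
    obtain ⟨yd, hyd, hu⟩ := exists_mul_assoc hcxy hu
    obtain ⟨yd', hyd', hv⟩ := exists_mul_assoc hcx'y hv
    obtain rfl : yd = yd' := Option.some_injective _ (hyd.symm.trans hyd')
    exact h.1 c yd u v (mul3_eq_some_iff.mpr ⟨cx, hcx, hu⟩)
      (mul3_eq_some_iff.mpr ⟨cx', hcx', hv⟩)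
  · obtain ⟨cx, hcx, hu⟩ := exists_mul_assoc_symm hz hu
    obtain ⟨cx', hcx', hv⟩ := exists_mul_assoc_symm hz' hv
    exact h.1 c y u v (mul3_eq_some_iff.mpr ⟨cx, hcx, hu⟩)
      (mul3_eq_some_iff.mpr ⟨cx', hcx', hv⟩)
  · obtain ⟨yd, hyd, hu⟩ := exists_mul_assoc hz hu
    obtain ⟨yd', hyd', hv⟩ := exists_mul_assoc hz' hv
    obtain rfl : yd = yd' := Option.some_injective _ (hyd.symm.trans hyd')
    exact h.2.2 yd u v hu hv

theorem synCong_mul_left {x y y' z z' : S.A} (h : S.synCong C y y')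
    (hz : S.mul x y = some z) (hz' : S.mul x y' = some z') : S.synCong C z z' := by
  refine ⟨fun c d u v hu hv => ?_, fun c u v hu hv => ?_, fun d u v hu hv => ?_⟩
  · obtain ⟨cz, hcz, hu⟩ := mul3_eq_some_iff.mp hu
    obtain ⟨cz', hcz', hv⟩ := mul3_eq_some_iff.mp hv
    obtain ⟨cx, hcx, hcxy⟩ := exists_mul_assoc_symm hz hcz
    obtain ⟨cx', hcx', hcxy'⟩ := exists_mul_assoc_symm hz' hcz'
    obtain rfl : cx = cx' := Option.some_injective _ (hcx.symm.trans hcx')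
    exact h.1 cx d u v (mul3_eq_some_iff.mpr ⟨cz, hcxy, hu⟩)
      (mul3_eq_some_iff.mpr ⟨cz', hcxy', hv⟩)
  · obtain ⟨cx, hcx, hu⟩ := exists_mul_assoc_symm hz hu
    obtain ⟨cx', hcx', hv⟩ := exists_mul_assoc_symm hz' hv
    obtain rfl : cx = cx' := Option.some_injective _ (hcx.symm.trans hcx')
    exact h.2.1 cx u v hu hv
  · exact h.1 x d u v (mul3_eq_some_iff.mpr ⟨z, hz, hu⟩)
      (mul3_eq_some_iff.mpr ⟨z', hz', hv⟩)

theorem synCong_of_dep (hC : S.Closed C) {a b : S.A} (h : S.dep a b) : S.synCong C a b := by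
  refine ⟨fun x y u v hu hv => ?_, fun x u v hu hv => hC (S.dep_mul_right h hu hv),
    fun y u v hu hv => hC (S.dep_mul_left h hu hv)⟩
  obtain ⟨xa, hxa, hu⟩ := mul3_eq_some_iff.mp hu
  obtain ⟨xb, hxb, hv⟩ := mul3_eq_some_iff.mp hv
  exact hC (S.dep_mul_left (S.dep_mul_right h hxa hxb) hu hv)

/-- The left context `unit ll · _` is defined everywhere and changes nothing up to dependency. -/
theorem mem_iff_of_synCong (hC : S.Closed C) {a b : S.A} (h : S.synCong C a b) :
    a ∈ C ↔ b ∈ C := by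
  obtain ⟨ua, hua⟩ := exists_unit_ll_mul a
  obtain ⟨ub, hub⟩ := exists_unit_ll_mul b
  rw [← hC (S.unit_mul hua), ← hC (S.unit_mul hub)]
  exact h.2.1 _ _ _ hua hub

end SynCong

variable (S) in
def SynEquiv (C : Set S.A) (x y : S.A) : Prop :=
  S.synCong C x y ∧ S.ty x = S.ty y

variable {C : Set S.A}

theorem synEquiv_equivalence : Equivalence (S.SynEquiv C) where
  refl a := ⟨synCong_refl a, rfl⟩
  symm h := ⟨synCong_symm h.1, h.2.symm⟩
  trans h₁ h₂ := ⟨synCong_trans_left h₁.2 h₁.1 h₂.1, h₁.2.trans h₂.2⟩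

variable (S C) in
def synSetoid : Setoid S.A := ⟨S.SynEquiv C, synEquiv_equivalence⟩

theorem synCong_congr {a a' b b' : S.A} (ha : S.SynEquiv C a a') (hb : S.SynEquiv C b b') :
    S.synCong C a b ↔ S.synCong C a' b' :=
  ⟨fun h => synCong_trans_right hb.2 (synCong_trans_left ha.2.symm (synCong_symm ha.1) h) hb.1,
   fun h => synCong_trans_right hb.2.symm (synCong_trans_left ha.2 ha.1 h) (synCong_symm hb.1)⟩

theorem synEquiv_mul {a a' b b' z z' : S.A} (ha : S.SynEquiv C a a') (hb : S.SynEquiv C b b')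
    (hz : S.mul a b = some z) (hz' : S.mul a' b' = some z') : S.SynEquiv C z z' := by
  obtain ⟨w, hw, hwz⟩ := exists_mul_of_ty_eq ha.2 rfl hz
  exact synEquiv_equivalence.trans ⟨synCong_mul_right ha.1 hz hw, hwz.symm⟩
    ⟨synCong_mul_left hb.1 hw hz', by rw [S.ty_mul hw, S.ty_mul hz', hb.2]⟩

theorem map_mk_mul_congr {a a' b b' : S.A} (ha : S.SynEquiv C a a') (hb : S.SynEquiv C b b') :
    (S.mul a b).map (Quotient.mk (S.synSetoid C)) =
      (S.mul a' b').map (Quotient.mk (S.synSetoid C)) := by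
  rcases hab : S.mul a b with _ | z
  · have : S.mul a' b' = none := by
      rw [← Option.not_isSome_iff_eq_none, S.mul_defined, ← ha.2, ← hb.2, ← S.mul_defined,
        hab]
      simp
    rw [this]
  · obtain ⟨z', hz', -⟩ := exists_mul_of_ty_eq ha.2 hb.2 hab
    rw [hz']
    exact congrArg some (Quotient.sound (synEquiv_mul ha hb hab hz'))

theorem map_mk_mul_eq_some_iff {a b c : S.A} :
    (S.mul a b).map (Quotient.mk (S.synSetoid C)) = some ⟦c⟧ ↔
      ∃ w, S.mul a b = some w ∧ S.SynEquiv C w c := by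
  simp only [Option.map_eq_some_iff, Quotient.eq]
  rfl

variable (S C) in
def synQuotient (hC : S.Closed C) : SyncAlg where
  A := Quotient (S.synSetoid C)
  ty := Quotient.lift S.ty fun _ _ h => h.2
  dep := Quotient.lift₂ (S.synCong C) fun _ _ _ _ ha hb => propext (synCong_congr ha hb)
  mul := Quotient.lift₂ (fun a b => (S.mul a b).map (Quotient.mk (S.synSetoid C)))
    fun _ _ _ _ ha hb => map_mk_mul_congr ha hb
  dep_refl := by rintro ⟨a⟩; exact synCong_refl a
  dep_symm := by rintro ⟨a⟩ ⟨b⟩ h; exact synCong_symm h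
  dep_eq := by rintro ⟨a⟩ ⟨b⟩ h hty; exact Quotient.sound ⟨h, hty⟩
  mul_defined := by
    rintro ⟨a⟩ ⟨b⟩
    simpa only [Option.isSome_map] using S.mul_defined a b
  ty_mul := by
    rintro ⟨a⟩ ⟨b⟩ ⟨c⟩ h
    obtain ⟨w, hw, hwc⟩ := map_mk_mul_eq_some_iff.mp h
    show S.ty c = (S.ty a).comp (S.ty b)
    rw [← hwc.2]
    exact S.ty_mul hw
  mul_assoc := by
    rintro ⟨a⟩ ⟨b⟩ ⟨c⟩
    have h := congrArg (Option.map (Quotient.mk (S.synSetoid C))) (S.mul_assoc a b c)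
    simp only [Option.map_bind] at h
    simp only [Option.bind_map]
    exact h
  dep_mul_left := by
    rintro ⟨a⟩ ⟨a'⟩ ⟨b⟩ ⟨c⟩ ⟨c'⟩ h h₁ h₂
    obtain ⟨w, hw, hwc⟩ := map_mk_mul_eq_some_iff.mp h₁
    obtain ⟨w', hw', hwc'⟩ := map_mk_mul_eq_some_iff.mp h₂
    exact (synCong_congr hwc hwc').mp (synCong_mul_right h hw hw')
  dep_mul_right := by
    rintro ⟨a⟩ ⟨a'⟩ ⟨b⟩ ⟨c⟩ ⟨c'⟩ h h₁ h₂
    obtain ⟨w, hw, hwc⟩ := map_mk_mul_eq_some_iff.mp h₁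
    obtain ⟨w', hw', hwc'⟩ := map_mk_mul_eq_some_iff.mp h₂
    exact (synCong_congr hwc hwc').mp (synCong_mul_left h hw hw')
  unit τ := ⟦S.unit τ⟧
  ty_unit := S.ty_unit
  unit_mul := by
    rintro τ ⟨a⟩ ⟨c⟩ h
    obtain ⟨w, hw, hwc⟩ := map_mk_mul_eq_some_iff.mp h
    exact (synCong_congr hwc (synEquiv_equivalence.refl a)).mp (synCong_of_dep hC (S.unit_mul hw))
  mul_unit := by
    rintro τ ⟨a⟩ ⟨c⟩ h
    obtain ⟨w, hw, hwc⟩ := map_mk_mul_eq_some_iff.mp h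
    exact (synCong_congr hwc (synEquiv_equivalence.refl a)).mp (synCong_of_dep hC (S.mul_unit hw))
  unit_lllb := congrArg (Option.map _) S.unit_lllb
  unit_llbl := congrArg (Option.map _) S.unit_llbl

variable (S C) in
def synQuotientHom (hC : S.Closed C) : SyncHom S (S.synQuotient C hC) where
  toFun := Quotient.mk (S.synSetoid C)
  map_ty _ := rfl
  map_unit _ := rfl
  map_mul h := congrArg (Option.map _) h
  map_dep h := synCong_of_dep hC h

theorem synQuotientHom_surjective (hC : S.Closed C) :
    Function.Surjective (S.synQuotientHom C hC).toFun :=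
  Quotient.mk_surjective

theorem synQuotientHom_preimage_image (hC : S.Closed C) :
    (S.synQuotientHom C hC).toFun ⁻¹' ((S.synQuotientHom C hC).toFun '' C) = C := by
  ext a
  refine ⟨fun ⟨b, hb, hba⟩ => ?_, fun ha => ⟨a, ha, rfl⟩⟩
  exact (mem_iff_of_synCong hC (Quotient.exact hba).1).mp hb

theorem closed_synQuotientHom_image (hC : S.Closed C) :
    (S.synQuotient C hC).Closed ((S.synQuotientHom C hC).toFun '' C) := by
  rintro ⟨a⟩ ⟨b⟩ h
  have hpre := Set.ext_iff.mp (synQuotientHom_preimage_image hC)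
  exact (hpre a).trans ((mem_iff_of_synCong hC h).trans (hpre b).symm)

theorem dep_of_synCong_of_retraction (hC : S.Closed C)
    (ψ : SyncHom (S.synQuotient C hC) S)
    (hψ : ∀ a, ψ.toFun ((S.synQuotientHom C hC).toFun a) = a)
    {a b : S.A} (h : S.synCong C a b) : S.dep a b := by
  simpa only [hψ] using ψ.map_dep (x := (S.synQuotientHom C hC).toFun a)
    (y := (S.synQuotientHom C hC).toFun b) h

end SyncAlg

def SyncHom.comp {S T U : SyncAlg} (g : SyncHom T U) (f : SyncHom S T) : SyncHom S U where
  toFun := g.toFun ∘ f.toFun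
  map_ty x := (g.map_ty _).trans (f.map_ty x)
  map_unit τ := (congrArg g.toFun (f.map_unit τ)).trans (g.map_unit τ)
  map_mul h := g.map_mul (f.map_mul h)
  map_dep h := g.map_dep (f.map_dep h)

theorem RecognizesRel.synQuotient {α : Type} {A : SyncAlg} {η : SyncHom (freeSync α) A}
    {Acc : Set A.A} {R : Set (List α × List α)} (h : RecognizesRel A η Acc R) :
    RecognizesRel (A.synQuotient Acc h.1) ((A.synQuotientHom Acc h.1).comp η)
      ((A.synQuotientHom Acc h.1).toFun '' Acc) R :=
  ⟨SyncAlg.closed_synQuotientHom_image h.1,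
    h.2.trans (congrArg (η.toFun ⁻¹' ·) (SyncAlg.synQuotientHom_preimage_image h.1).symm)⟩

/-- In the syntactic synchronous algebra of a relation `R`
(characterized by its universal property), the syntactic congruence of the
accepting set coincides with the dependency relation. -/
theorem synCong_eq_dep_in_syntactic_algebra (α : Type) (R : Set (List α × List α))
    (A : SyncAlg) (η : SyncHom (freeSync α) A)
    (hs : Function.Surjective η.toFun)
    (Acc : Set A.A) (hrec : RecognizesRel A η Acc R)
    (huniv : ∀ (B : SyncAlg) (φ : SyncHom (freeSync α) B),
      Function.Surjective φ.toFun → (∃ Acc' : Set B.A, RecognizesRel B φ Acc' R) →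
      ∃ ψ : SyncHom B A,
        Function.Surjective ψ.toFun ∧ ∀ u, ψ.toFun (φ.toFun u) = η.toFun u) :
    ∀ x y : A.A, A.synCong Acc x y ↔ A.dep x y := by
  obtain ⟨ψ, -, hψ⟩ :=
    huniv _ _ ((A.synQuotientHom_surjective hrec.1).comp hs) ⟨_, hrec.synQuotient⟩
  have hretract : ∀ a, ψ.toFun ((A.synQuotientHom Acc hrec.1).toFun a) = a := hs.forall.2 hψ
  exact fun x y => ⟨A.dep_of_synCong_of_retraction hrec.1 ψ hretract, A.synCong_of_dep hrec.1⟩
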